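/- arXiv:2507.23338 — 4 statements merged into one kernel-verified Lean document; each statement's English description precedes it below -/
import Mathlib

section
/- Suppose S < T and U < V are proper inclusions of finite groups, S is a maximal subgroup of T, and S is not a normal subgroup of T. Then S × U ≤ T × V admits no diagonal subgroups. -/
/-! Let `G` be diagonal and `K = {t | (t, 1) ∈ G}`, so `S ≤ K`. Since `G` is not inside `S × V`,
its projection to `T` properly contains `S`, hence is all of `T` by maximality. Conjugating
`(k, 1)` by elements of `G` then shows that `K` is normal in `T`, so `K ≠ S`, and maximality
gives `K = T`. Together with `1 × U ≤ G` this puts `T × U` inside `G`, a contradiction. -/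

/-- `G` is a *diagonal* subgroup for the pair `S × U ≤ T × V`:
it lies between `S × U` and `T × V = ⊤`, does not contain `T × U`
and is not contained in `S × V`. -/
def IsDiagonal {T V : Type*} [Group T] [Group V]
    (S : Subgroup T) (U : Subgroup V) (G : Subgroup (T × V)) : Prop :=
  S.prod U ≤ G ∧ ¬ ((⊤ : Subgroup T).prod U ≤ G) ∧ ¬ (G ≤ S.prod (⊤ : Subgroup V))

namespace Subgroup

variable {T V : Type*} [Group T] [Group V]

theorem comap_inl_le_map_fst (G : Subgroup (T × V)) :
    G.comap (MonoidHom.inl T V) ≤ G.map (MonoidHom.fst T V) :=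
  fun t ht => ⟨(t, 1), ht, rfl⟩

theorem normal_comap_inl_of_map_fst_eq_top {G : Subgroup (T × V)}
    (hG : G.map (MonoidHom.fst T V) = ⊤) : (G.comap (MonoidHom.inl T V)).Normal where
  conj_mem k hk t := by
    obtain ⟨⟨t', v⟩, htv, rfl⟩ : t ∈ G.map (MonoidHom.fst T V) := hG ▸ mem_top t
    have hconj : (t', v) * (k, 1) * (t', v)⁻¹ ∈ G := G.mul_mem (G.mul_mem htv hk) (G.inv_mem htv)
    simpa [mul_assoc] using hconj

end Subgroup

theorem max_nonnormal_no_diagonal_general {T V : Type*} [Group T] [Group V]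
    (S : Subgroup T) (U : Subgroup V)
    (hmax : IsCoatom S) (hnn : ¬ S.Normal) :
    ∀ G : Subgroup (T × V), ¬ IsDiagonal S U G := by
  rintro G ⟨hSU, hTU, hSV⟩
  have hSK : S ≤ G.comap (MonoidHom.inl T V) := fun s hs => hSU ⟨hs, U.one_mem⟩
  have hfst : G.map (MonoidHom.fst T V) = ⊤ := by
    refine hmax.2 _ (lt_of_le_not_ge (hSK.trans G.comap_inl_le_map_fst) fun h => hSV ?_)
    rwa [Subgroup.prod_top, ← Subgroup.map_le_iff_le_comap]
  have hK : G.comap (MonoidHom.inl T V) = ⊤ :=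
    hmax.2 _ (hSK.lt_of_ne fun h => hnn (h ▸ Subgroup.normal_comap_inl_of_map_fst_eq_top hfst))
  exact hTU (Subgroup.prod_le_iff.2
    ⟨Subgroup.map_le_iff_le_comap.2 hK.ge, (Subgroup.prod_le_iff.1 hSU).2⟩)

theorem max_nonnormal_no_diagonal {T V : Type*} [Group T] [Group V] [Finite T] [Finite V]
    (S : Subgroup T) (U : Subgroup V) (hS : S < ⊤) (hU : U < ⊤)
    (hmax : IsCoatom S) (hnn : ¬ S.Normal) :
    ∀ G : Subgroup (T × V), ¬ IsDiagonal S U G :=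
  max_nonnormal_no_diagonal_general S U hmax hnn
end

section
/- Suppose S < T and U < V are proper inclusions of finite groups, S is a normal subgroup of T, and T/S is cyclic of prime order p. Then S × U ≤ T × V admits a diagonal group if and only if there exist subgroups N and R of V with U ≤ N ≤ R ≤ V, N normal in R, and R/N cyclic of order p. In particular, if p does not divide the index [V : U], then no diagonal group exists. -/
/-- There are subgroups `U ≤ N ≤ R ≤ V` with `N` normal in `R` and `R/N` cyclic of order `p`. -/
def HasCyclicStep {V : Type*} [Group V] (U : Subgroup V) (p : ℕ) : Prop :=
  ∃ N R : Subgroup V, U ≤ N ∧ N ≤ R ∧ ∃ hn : (N.subgroupOf R).Normal,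
    letI := hn
    IsCyclic (↥R ⧸ N.subgroupOf R) ∧ Nat.card (↥R ⧸ N.subgroupOf R) = p

/-!
A subgroup of prime index is maximal, so a diagonal `G` meets `T × 1` exactly in `S` and projects
onto `T`. Goursat's lemma, applied to `G` inside `T × R` with `R` the projection of `G` to `V`, then
gives `T / S ≃ R / N` for `N = {v | (1, v) ∈ G}`, and `U ≤ N`. Conversely, for `U ≤ N ⊴ R` with
`R / N` of order `p`, the preimage of the graph of an isomorphism `T / S ≃ R / N` is diagonal.
Finally `p = [R : N]` divides `[R : U]`, which divides `[V : U]`.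
-/

namespace Subgroup

variable {T V : Type*} [Group T] [Group V]

theorem isCoatom_of_index_prime {S : Subgroup T} (h : S.index.Prime) : IsCoatom S := by
  refine ⟨fun hS ↦ Nat.not_prime_one (by simpa [hS] using h), fun K hSK ↦ ?_⟩
  rcases Nat.prime_mul_iff.mp (relIndex_mul_index hSK.le ▸ h) with ⟨-, hK⟩ | ⟨-, hSK'⟩
  · exact index_eq_one.mp hK
  · exact absurd (relIndex_eq_one.mp hSK') (not_le_of_gt hSK)

def restrictSnd (G : Subgroup (T × V)) : Subgroup (T × G.map (MonoidHom.snd T V)) :=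
  G.comap ((MonoidHom.id T).prodMap (G.map (MonoidHom.snd T V)).subtype)

variable (G : Subgroup (T × V))

theorem surjective_snd_restrictSnd : Function.Surjective (Prod.snd ∘ G.restrictSnd.subtype) := by
  rintro ⟨_, x, hx, rfl⟩
  exact ⟨⟨(x.1, ⟨x.2, x, hx, rfl⟩), hx⟩, rfl⟩

theorem surjective_fst_restrictSnd (hG : G.map (MonoidHom.fst T V) = ⊤) :
    Function.Surjective (Prod.fst ∘ G.restrictSnd.subtype) := by
  intro t
  obtain ⟨x, hx, rfl⟩ : t ∈ G.map (MonoidHom.fst T V) := hG ▸ mem_top t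
  exact ⟨⟨(x.1, ⟨x.2, x, hx, rfl⟩), hx⟩, rfl⟩

theorem goursatFst_restrictSnd : G.restrictSnd.goursatFst = G.comap (MonoidHom.inl T V) := by
  ext; simp [restrictSnd]

theorem goursatSnd_restrictSnd :
    G.restrictSnd.goursatSnd =
      (G.comap (MonoidHom.inr T V)).subgroupOf (G.map (MonoidHom.snd T V)) := by
  ext; simp [restrictSnd, mem_subgroupOf]

theorem normal_comap_inr_subgroupOf_map_snd :
    ((G.comap (MonoidHom.inr T V)).subgroupOf (G.map (MonoidHom.snd T V))).Normal :=
  G.goursatSnd_restrictSnd ▸ normal_goursatSnd G.surjective_snd_restrictSnd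

theorem relIndex_comap_inr_map_snd (hG : G.map (MonoidHom.fst T V) = ⊤) :
    (G.comap (MonoidHom.inr T V)).relIndex (G.map (MonoidHom.snd T V)) =
      (G.comap (MonoidHom.inl T V)).index := by
  have hfst := G.surjective_fst_restrictSnd hG
  have := normal_goursatFst hfst
  have := normal_goursatSnd G.surjective_snd_restrictSnd
  obtain ⟨e, -⟩ := goursat_surjective hfst G.surjective_snd_restrictSnd
  rw [relIndex, ← goursatSnd_restrictSnd, ← goursatFst_restrictSnd, index, index]
  exact (Nat.card_congr e.toEquiv).symm

end Subgroup

open Subgroup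

section

variable {T V : Type*} [Group T] [Group V] {S : Subgroup T} {U : Subgroup V} {p : ℕ}

namespace IsDiagonal

variable {G : Subgroup (T × V)}

theorem mk_one_mem (hG : IsDiagonal S U G) {s : T} (hs : s ∈ S) : (s, (1 : V)) ∈ G :=
  hG.1 ⟨hs, U.one_mem⟩

theorem one_mk_mem (hG : IsDiagonal S U G) {u : V} (hu : u ∈ U) : ((1 : T), u) ∈ G :=
  hG.1 ⟨S.one_mem, hu⟩

theorem comap_inl_eq (hS : IsCoatom S) (hG : IsDiagonal S U G) :
    G.comap (MonoidHom.inl T V) = S := by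
  refine (hS.le_iff.mp fun s hs ↦ hG.mk_one_mem hs).resolve_left fun htop ↦ hG.2.1 ?_
  rintro ⟨t, u⟩ ⟨-, hu⟩
  have ht : (t, (1 : V)) ∈ G := (htop ▸ mem_top t : t ∈ G.comap (MonoidHom.inl T V))
  simpa using G.mul_mem ht (hG.one_mk_mem hu)

theorem map_fst_eq_top (hS : IsCoatom S) (hG : IsDiagonal S U G) :
    G.map (MonoidHom.fst T V) = ⊤ :=
  (hS.le_iff.mp fun _ hs ↦ mem_map_of_mem _ (hG.mk_one_mem hs)).resolve_right fun hfst ↦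
    hG.2.2 fun x hx ↦ ⟨hfst ▸ ⟨x, hx, rfl⟩, mem_top _⟩

theorem hasCyclicStep (hp : p.Prime) (hcard : S.index = p) (hG : IsDiagonal S U G) :
    HasCyclicStep U p := by
  have hS := isCoatom_of_index_prime (hcard ▸ hp)
  have : Fact p.Prime := ⟨hp⟩
  have hrel := G.relIndex_comap_inr_map_snd (hG.map_fst_eq_top hS)
  rw [hG.comap_inl_eq hS, hcard] at hrel
  have hN := G.normal_comap_inr_subgroupOf_map_snd
  exact ⟨_, _, fun _ ↦ hG.one_mk_mem, fun _ hv ↦ mem_map_of_mem (MonoidHom.snd T V) hv,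
    hN, isCyclic_of_prime_card hrel, hrel⟩

end IsDiagonal

namespace Subgroup

def quotientGraph (R : Subgroup V) (M : Subgroup R) [M.Normal] (f : T →* R ⧸ M) :
    Subgroup (T × V) :=
  (f.graph.comap ((MonoidHom.id T).prodMap (QuotientGroup.mk' M))).map
    ((MonoidHom.id T).prodMap R.subtype)

theorem mem_quotientGraph {R : Subgroup V} {M : Subgroup R} [M.Normal] {f : T →* R ⧸ M} {t : T}
    {v : V} : (t, v) ∈ quotientGraph R M f ↔ ∃ h : v ∈ R, f t = (⟨v, h⟩ : R) := by
  simp [quotientGraph, MonoidHom.mem_graph]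

end Subgroup

theorem isDiagonal_quotientGraph {N R : Subgroup V} [(N.subgroupOf R).Normal]
    (hUN : U ≤ N) (hNR : N ≤ R) {f : T →* R ⧸ N.subgroupOf R} (hf : f.ker = S) (hS : S ≠ ⊤) :
    IsDiagonal S U (quotientGraph R (N.subgroupOf R) f) := by
  have hker {t : T} : f t = 1 ↔ t ∈ S := by rw [← hf, MonoidHom.mem_ker]
  obtain ⟨t, -, ht⟩ := SetLike.exists_of_lt hS.lt_top
  refine ⟨?_, fun hTU ↦ ?_, fun hG ↦ ?_⟩
  · rintro ⟨s, u⟩ ⟨hs, hu⟩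
    refine mem_quotientGraph.mpr ⟨hNR (hUN hu), ?_⟩
    rw [hker.mpr hs, eq_comm, QuotientGroup.eq_one_iff]
    exact hUN hu
  · obtain ⟨_, htu⟩ := mem_quotientGraph.mp
      (hTU (show (t, (1 : V)) ∈ (⊤ : Subgroup T).prod U from ⟨mem_top t, U.one_mem⟩))
    exact ht (hker.mp (htu.trans ((QuotientGroup.eq_one_iff _).mpr N.one_mem)))
  · obtain ⟨r, hr⟩ := QuotientGroup.mk_surjective (f t)
    exact ht (hG (mem_quotientGraph.mpr ⟨r.2, hr.symm⟩)).1

theorem HasCyclicStep.exists_isDiagonal [S.Normal] (hp : p.Prime) (hcard : S.index = p)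
    (h : HasCyclicStep U p) : ∃ G : Subgroup (T × V), IsDiagonal S U G := by
  obtain ⟨N, R, hUN, hNR, hn, -, hNR_card⟩ := h
  have : Fact p.Prime := ⟨hp⟩
  let e : T ⧸ S ≃* R ⧸ N.subgroupOf R := mulEquivOfPrimeCardEq hcard hNR_card
  have hS : S ≠ ⊤ := fun hS ↦ hp.one_lt.ne' (hcard ▸ index_eq_one.mpr hS)
  have hker : (e.toMonoidHom.comp (QuotientGroup.mk' S)).ker = S := by
    rw [MonoidHom.ker_comp_of_injective _ _ e.injective, QuotientGroup.ker_mk']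
  exact ⟨_, isDiagonal_quotientGraph hUN hNR hker hS⟩

theorem HasCyclicStep.dvd_index (h : HasCyclicStep U p) : p ∣ U.index := by
  obtain ⟨N, R, hUN, hNR, -, -, hcard⟩ := h
  calc p = N.relIndex R := hcard.symm
    _ ∣ U.relIndex R := relIndex_dvd_of_le_left R hUN
    _ ∣ U.index := relIndex_dvd_index_of_le (hUN.trans hNR)

end

theorem normal_prime_index_diagonal_iff_general {T V : Type*} [Group T] [Group V]
    (S : Subgroup T) (U : Subgroup V)
    (hSn : S.Normal) (p : ℕ) (hp : p.Prime)
    (hcard : Nat.card (T ⧸ S) = p) :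
    ((∃ G : Subgroup (T × V), IsDiagonal S U G) ↔ HasCyclicStep U p) ∧
    (¬ (p ∣ U.index) → ∀ G : Subgroup (T × V), ¬ IsDiagonal S U G) :=
  ⟨⟨fun ⟨_, hG⟩ ↦ hG.hasCyclicStep hp hcard, fun h ↦ h.exists_isDiagonal hp hcard⟩,
    fun hndvd _ hG ↦ hndvd (hG.hasCyclicStep hp hcard).dvd_index⟩

theorem normal_prime_index_diagonal_iff {T V : Type*} [Group T] [Group V] [Finite T] [Finite V]
    (S : Subgroup T) (U : Subgroup V) (hS : S < ⊤) (hU : U < ⊤)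
    (hSn : S.Normal) (p : ℕ) (hp : p.Prime)
    (hcyc : IsCyclic (T ⧸ S)) (hcard : Nat.card (T ⧸ S) = p) :
    ((∃ G : Subgroup (T × V), IsDiagonal S U G) ↔ HasCyclicStep U p) ∧
    (¬ (p ∣ U.index) → ∀ G : Subgroup (T × V), ¬ IsDiagonal S U G) :=
  normal_prime_index_diagonal_iff_general S U hSn p hp hcard
end

section
/- Let k ≥ 3 be an integer and let S_{k-1} denote the point stabilizer of the k-th element in the symmetric group S_k. Then for all proper inclusions of finite groups U < V, the pair S_{k-1} × U ≤ S_k × V admits no diagonal groups. -/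
lemma swap_mem_stab {k : ℕ} {a b c : Fin k} (ha : a ≠ c) (hb : b ≠ c) :
    Equiv.swap a b ∈ MulAction.stabilizer (Equiv.Perm (Fin k)) c := by
  rw [MulAction.mem_stabilizer_iff]
  exact Equiv.swap_apply_of_ne_of_ne (Ne.symm ha) (Ne.symm hb)

lemma stab_sup_stab {k : ℕ} (hk : 3 ≤ k) (p q : Fin k) (hpq : p ≠ q) :
    MulAction.stabilizer (Equiv.Perm (Fin k)) p ⊔
      MulAction.stabilizer (Equiv.Perm (Fin k)) q = ⊤ := by
  obtain ⟨r, hrp, hrq⟩ : ∃ r : Fin k, r ≠ p ∧ r ≠ q := by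
    by_contra h
    push_neg at h
    have hsub : (Finset.univ : Finset (Fin k)) ⊆ {p, q} := by
      intro x _
      by_cases hx : x = p
      · simp [hx]
      · simp [h x hx]
    have := Finset.card_le_card hsub
    simp only [Finset.card_univ, Fintype.card_fin] at this
    have h2 : ({p, q} : Finset (Fin k)).card ≤ 2 :=
      (Finset.card_insert_le _ _).trans (by simp)
    omega
  have hpqcase : Equiv.swap p q ∈ MulAction.stabilizer (Equiv.Perm (Fin k)) p ⊔
      MulAction.stabilizer (Equiv.Perm (Fin k)) q := by
    have key : Equiv.swap r q * Equiv.swap p r * Equiv.swap r q = Equiv.swap p q := by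
      rw [Equiv.swap_mul_swap_mul_swap (Ne.symm hrp) hpq, Equiv.swap_comm q p]
    rw [← key]
    have h1 : Equiv.swap r q ∈ MulAction.stabilizer (Equiv.Perm (Fin k)) p ⊔
        MulAction.stabilizer (Equiv.Perm (Fin k)) q :=
      Subgroup.mem_sup_left (swap_mem_stab hrp (Ne.symm hpq))
    have h2 : Equiv.swap p r ∈ MulAction.stabilizer (Equiv.Perm (Fin k)) p ⊔
        MulAction.stabilizer (Equiv.Perm (Fin k)) q :=
      Subgroup.mem_sup_right (swap_mem_stab hpq hrq)
    exact mul_mem (mul_mem h1 h2) h1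
  rw [eq_top_iff, ← Equiv.Perm.closure_isSwap, Subgroup.closure_le]
  rintro σ ⟨a, b, hab, rfl⟩
  rcases eq_or_ne a p with rfl | hap
  · rcases eq_or_ne b q with rfl | hbq
    · exact hpqcase
    · exact Subgroup.mem_sup_right (swap_mem_stab hpq hbq)
  · rcases eq_or_ne b p with rfl | hbp
    · rcases eq_or_ne a q with rfl | haq
      · rw [Equiv.swap_comm]
        exact hpqcase
      · exact Subgroup.mem_sup_right (swap_mem_stab haq hpq)
    · exact Subgroup.mem_sup_left (swap_mem_stab hap hbp)

theorem symmetric_stabilizer_no_diagonal (k : ℕ) (hk : 3 ≤ k)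
    {V : Type*} [Group V] [Finite V] (U : Subgroup V) (hU : U < ⊤) :
    ∀ G : Subgroup (Equiv.Perm (Fin k) × V),
      ¬ IsDiagonal (MulAction.stabilizer (Equiv.Perm (Fin k)) (⟨k - 1, by omega⟩ : Fin k)) U G := by
  intro G ⟨h1, h2, h3⟩
  set p : Fin k := ⟨k - 1, by omega⟩ with hp
  set S := MulAction.stabilizer (Equiv.Perm (Fin k)) p with hS
  rw [SetLike.not_le_iff_exists] at h3
  obtain ⟨x, hxG, hxS⟩ := h3
  have htS : x.1 ∉ S := by
    intro h
    exact hxS (Subgroup.mem_prod.mpr ⟨h, trivial⟩)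
  -- N = { t | (t, 1) ∈ G }
  set N : Subgroup (Equiv.Perm (Fin k)) :=
    Subgroup.comap (MonoidHom.inl (Equiv.Perm (Fin k)) V) G with hNdef
  have hSsub : S ≤ N := by
    intro s hs
    exact h1 (Subgroup.mem_prod.mpr ⟨hs, one_mem U⟩)
  have hconj : MulAction.stabilizer (Equiv.Perm (Fin k)) (x.1 • p) ≤ N := by
    intro y hy
    rw [MulAction.stabilizer_smul_eq_stabilizer_map_conj] at hy
    obtain ⟨s, hs, rfl⟩ := hy
    have h' : x * (s, (1 : V)) * x⁻¹ ∈ G :=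
      mul_mem (mul_mem hxG (hSsub hs)) (inv_mem hxG)
    have heq : x * (s, (1 : V)) * x⁻¹ = (x.1 * s * x.1⁻¹, 1) := by
      simp [Prod.ext_iff]
    rw [heq] at h'
    exact h'
  have hne : x.1 • p ≠ p := fun h => htS (MulAction.mem_stabilizer_iff.mpr h)
  have hNtop : N = ⊤ := by
    rw [eq_top_iff, ← stab_sup_stab hk p (x.1 • p) (Ne.symm hne)]
    exact sup_le hSsub hconj
  apply h2
  intro y hy
  rw [Subgroup.mem_prod] at hy
  have hy2 : ((1 : Equiv.Perm (Fin k)), y.2) ∈ G :=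
    h1 (Subgroup.mem_prod.mpr ⟨one_mem S, hy.2⟩)
  have hy1 : (y.1, (1 : V)) ∈ G := by
    have : y.1 ∈ N := hNtop ▸ Subgroup.mem_top y.1
    exact this
  have := mul_mem hy1 hy2
  simpa using this
end

section
/- Let K ⊆ L be totally real number fields, U an L-vector space, B : U × U → L a symmetric positive definite L-bilinear form (positive definite meaning B(v,v) ≠ 0 and totally positive in L for all nonzero v, or equivalently positive under each real embedding), and let v_1, …, v_n ∈ U be vectors such that B(v_i, v_j) ∈ K for all 1 ≤ i, j ≤ n. Then the dimension over K of the K-span of {v_1, …, v_n} equals the dimension over L of the L-span of {v_1, …, v_n}. -/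
/-!
Under any real embedding the form is positive definite, so it is anisotropic. Choose a
K-basis `b` of the K-span among the `v i`. Its Gram matrix has entries in K and, by
anisotropy, trivial kernel over K; its determinant is therefore a nonzero element of K,
which makes `b` independent over L as well. Since `b` also spans the L-span, both
dimensions equal the size of `b`.
-/

def TotallyPositive (F : Type*) [Field F] (x : F) : Prop :=
  ∀ φ : F →+* ℝ, 0 < φ x

def IsTotallyRealField (F : Type*) [Field F] : Prop :=
  ∀ φ : F →+* ℂ, ∀ x : F, (φ x).im = 0

theorem IsTotallyRealField.nonempty_ringHom_real {L : Type*} [Field L] [NumberField L]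
    (hL : IsTotallyRealField L) : Nonempty (L →+* ℝ) := by
  obtain ⟨φ⟩ : Nonempty (L →+* ℂ) := inferInstance
  have hφ : NumberField.ComplexEmbedding.IsReal φ := by
    rw [NumberField.ComplexEmbedding.isReal_iff]
    ext x
    simpa [NumberField.ComplexEmbedding.conjugate, Complex.conj_eq_iff_im] using hL φ x
  exact ⟨hφ.embedding⟩

section Gram

open Matrix

variable {L U : Type*} [Field L] [AddCommGroup U] [Module L U]
  {B : U →ₗ[L] U →ₗ[L] L} {ι : Type*} [Fintype ι] {w : ι → U}

theorem sum_smul_eq_zero_of_forall_apply_eq_zero (hB : ∀ u, B u u = 0 → u = 0) {x : ι → L}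
    (h : ∀ i, B (w i) (∑ j, x j • w j) = 0) : ∑ j, x j • w j = 0 :=
  hB _ (by
    rw [LinearMap.map_sum₂]
    exact Finset.sum_eq_zero fun j _ => by rw [LinearMap.map_smul₂, h, smul_zero])

theorem linearIndependent_of_gram_mem_range {F : Type*} [Field F] [Algebra F L] [Module F U]
    [IsScalarTower F L U] (hB : ∀ u, B u u = 0 → u = 0)
    (hgram : ∀ i j, B (w i) (w j) ∈ (algebraMap F L).range) (hw : LinearIndependent F w) :
    LinearIndependent L w := by
  classical
  choose G hG using hgram
  have hmulVec (x : ι → L) :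
      (of G).map (algebraMap F L) *ᵥ x = fun i => B (w i) (∑ j, x j • w j) := by
    ext i
    simp [mulVec, dotProduct, map_sum, hG, mul_comm]
  have hdet : (of G).det ≠ 0 := by
    rw [Ne, ← exists_mulVec_eq_zero_iff]
    rintro ⟨x, hx0, hx⟩
    refine hx0 (funext (Fintype.linearIndependent_iff.1 hw x ?_))
    have h (i : ι) : B (w i) (∑ j, algebraMap F L (x j) • w j) = 0 := by
      simpa [RingHom.map_mulVec, hmulVec] using congrArg (algebraMap F L) (congrFun hx i)
    simpa only [algebraMap_smul] using sum_smul_eq_zero_of_forall_apply_eq_zero hB h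
  rw [Fintype.linearIndependent_iff]
  intro d hd
  refine congrFun (eq_zero_of_mulVec_eq_zero ?_ (by rw [hmulVec, hd]; ext; simp))
  rwa [← RingHom.mapMatrix_apply, ← RingHom.map_det, Ne, map_eq_zero]

end Gram

theorem span_dim_eq_of_gram_in_subfield_general
    (L : Type*) [Field L] [NumberField L] (hL : IsTotallyRealField L)
    (K : Subfield L)
    (U : Type*) [AddCommGroup U] [Module L U]
    (B : U →ₗ[L] U →ₗ[L] L)
    (hpos : ∀ v : U, v ≠ 0 → TotallyPositive L (B v v))
    (n : ℕ) (v : Fin n → U)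
    (hmem : ∀ i j : Fin n, B (v i) (v j) ∈ K) :
    Module.finrank ↥K ↥(Submodule.span ↥K (Set.range v)) =
      Module.finrank L ↥(Submodule.span L (Set.range v)) := by
  obtain ⟨σ⟩ := hL.nonempty_ringHom_real
  have hB (u : U) (hu : B u u = 0) : u = 0 :=
    by_contra fun h => (hpos u h σ).ne' (by rw [hu, map_zero])
  obtain ⟨b, hb_sub, hb_span, hb_indep⟩ := exists_linearIndependent K (Set.range v)
  have : Fintype b := ((Set.finite_range v).subset hb_sub).fintype
  have hb_indepL : LinearIndependent L ((↑) : b → U) := by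
    refine linearIndependent_of_gram_mem_range hB (fun x y => ?_) hb_indep
    obtain ⟨i, hi⟩ := hb_sub x.2
    obtain ⟨j, hj⟩ := hb_sub y.2
    rw [← hi, ← hj]
    exact ⟨⟨_, hmem i j⟩, rfl⟩
  have hb_spanL : Submodule.span L b = Submodule.span L (Set.range v) := by
    refine le_antisymm (Submodule.span_mono hb_sub) (Submodule.span_le.2 ?_)
    have hv : Set.range v ⊆ Submodule.span K b := hb_span ▸ Submodule.subset_span
    exact hv.trans (Submodule.span_le_restrictScalars K L b)
  rw [← hb_span, ← hb_spanL, finrank_span_set_eq_card hb_indep,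
    finrank_span_set_eq_card hb_indepL]

theorem span_dim_eq_of_gram_in_subfield
    (L : Type*) [Field L] [NumberField L] (hL : IsTotallyRealField L)
    (K : Subfield L) (hK : IsTotallyRealField ↥K)
    (U : Type*) [AddCommGroup U] [Module L U]
    (B : U →ₗ[L] U →ₗ[L] L)
    (hsymm : ∀ u v : U, B u v = B v u)
    (hpos : ∀ v : U, v ≠ 0 → TotallyPositive L (B v v))
    (n : ℕ) (v : Fin n → U)
    (hmem : ∀ i j : Fin n, B (v i) (v j) ∈ K) :
    Module.finrank ↥K ↥(Submodule.span ↥K (Set.range v)) =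
      Module.finrank L ↥(Submodule.span L (Set.range v)) :=
  span_dim_eq_of_gram_in_subfield_general L hL K U B hpos n v hmem
end
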